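/- Let G be a group, S ⊆ G a symmetric, conjugation-closed generating set not containing the identity, and ‖·‖_S the associated word norm. Let Φ: G → ℝ be a relative quasimorphism with respect to ‖·‖_S with constant C. Assume that for every g ∈ G the limit Φ̄(g) = lim_{n→∞} Φ(gⁿ)/n exists, and that Φ̄(s) = 0 for every s ∈ S. Then |Φ̄(f)| ≤ 3·C·‖f‖_S for every f ∈ G. -/

import Mathlib

/-- The word norm associated with a generating set `S`: the least `n` such that `g`
is a product of `n` elements of `S` (so the identity has word norm `0`). -/
noncomputable def wordNorm {G : Type*} [Group G] (S : Set G) (g : G) : ℕ :=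
  sInf {n : ℕ | ∃ l : List G, l.length = n ∧ (∀ x ∈ l, x ∈ S) ∧ l.prod = g}

/-!
Once one factor lies in `S`, the defect of `Φ` is at most `C`, so `Φ` stays within `C` of its
stabilization `Φbar` on `S`; since `Φbar` vanishes on `S`, this gives `|Φ s| ≤ C`, and left
multiplication by an element of `S` moves `Φ` by at most `2C`. The identity
`(s g)ⁿ = (∏_{i<n} gⁱ s g⁻ⁱ) gⁿ` writes `(s g)ⁿ` as `n` elements of the conjugation-closed set `S`
times `gⁿ`, so `|Φ((s g)ⁿ) - Φ(gⁿ)| ≤ 2Cn` and hence `|Φbar (s g) - Φbar g| ≤ 2C`. Telescoping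
along a shortest word for `f` yields `|Φbar f| ≤ 2C‖f‖_S ≤ 3C‖f‖_S`.
-/

open Filter Topology

section

variable {G : Type*} [Group G] {S : Set G}

theorem wordNorm_le_one_of_mem {s : G} (hs : s ∈ S) : wordNorm S s ≤ 1 :=
  Nat.sInf_le ⟨[s], rfl, by simpa using hs, by simp⟩

theorem exists_list_length_eq_wordNorm (hgen : Subgroup.closure S = ⊤)
    (hsymm : ∀ s ∈ S, s⁻¹ ∈ S) (f : G) :
    ∃ l : List G, l.length = wordNorm S f ∧ (∀ x ∈ l, x ∈ S) ∧ l.prod = f := by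
  have hinv : S⁻¹ ⊆ S := fun x hx => by simpa using hsymm x⁻¹ hx
  have hf : f ∈ Submonoid.closure S := by
    have : f ∈ (Subgroup.closure S).toSubmonoid := by simp [hgen]
    rwa [Subgroup.closure_toSubmonoid, Set.union_eq_self_of_subset_right hinv] at this
  obtain ⟨l, hl, hprod⟩ := Submonoid.exists_list_of_mem_closure hf
  exact Nat.sInf_mem (s := {n | ∃ l : List G, l.length = n ∧ (∀ x ∈ l, x ∈ S) ∧ l.prod = f})
    ⟨l.length, l, rfl, hl, hprod⟩

theorem mul_pow_eq_prod_conj_mul_pow (s g : G) (n : ℕ) :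
    (s * g) ^ n = ((List.range n).map fun i => g ^ i * s * (g ^ i)⁻¹).prod * g ^ n := by
  induction n with
  | zero => simp
  | succ n ih =>
    rw [List.range_succ, List.map_append, List.prod_append, pow_succ, ih]
    simp only [List.map_cons, List.map_nil, List.prod_cons, List.prod_nil]
    group

theorem abs_le_of_tendsto_div_natCast {a : ℕ → ℝ} {l D : ℝ}
    (ha : Tendsto (fun n : ℕ => a n / n) atTop (𝓝 l)) (hbound : ∀ n : ℕ, |a n| ≤ D * n) :
    |l| ≤ D := by
  refine le_of_tendsto ha.abs ?_
  filter_upwards [eventually_ge_atTop 1] with n hn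
  have hn : (0 : ℝ) < n := by exact_mod_cast hn
  rw [abs_div, abs_of_pos hn, div_le_iff₀ hn]
  exact hbound n

theorem abs_apply_list_prod_mul_sub_le {F : G → ℝ} {D : ℝ}
    (hF : ∀ s ∈ S, ∀ x, |F (s * x) - F x| ≤ D) {l : List G} (hl : ∀ s ∈ l, s ∈ S) (x : G) :
    |F (l.prod * x) - F x| ≤ D * l.length := by
  induction l with
  | nil => simp
  | cons s l ih =>
    have hs := hF s (hl s List.mem_cons_self) (l.prod * x)
    have hrest := ih fun t ht => hl t (List.mem_cons_of_mem s ht)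
    rw [List.prod_cons, mul_assoc, List.length_cons, Nat.cast_succ]
    calc |F (s * (l.prod * x)) - F x|
        ≤ |F (s * (l.prod * x)) - F (l.prod * x)| + |F (l.prod * x) - F x| := abs_sub_le _ _ _
      _ ≤ D * l.length + D := by linarith
      _ = D * (l.length + 1) := by ring

theorem abs_stabilization_sub_le {Φ Φbar : G → ℝ} {C : ℝ} {s : G}
    (hdef : ∀ x, |Φ (s * x) - Φ s - Φ x| ≤ C)
    (hlim : Tendsto (fun n : ℕ => Φ (s ^ n) / n) atTop (𝓝 (Φbar s))) :
    |Φbar s - Φ s| ≤ C := by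
  have hpow : ∀ n : ℕ, |Φ (s ^ n) - Φ 1 - n * Φ s| ≤ C * n := by
    intro n
    induction n with
    | zero => simp
    | succ n ih =>
      have hstep := hdef (s ^ n)
      rw [← pow_succ'] at hstep
      rw [abs_le] at hstep ih ⊢
      push_cast
      constructor <;> linarith
  refine abs_le_of_tendsto_div_natCast ?_ hpow
  have hlim' := (hlim.sub (tendsto_const_div_atTop_nhds_zero_nat (Φ 1))).sub_const (Φ s)
  rw [sub_zero] at hlim'
  refine hlim'.congr' ?_
  filter_upwards [eventually_ge_atTop 1] with n hn
  have hn : (n : ℝ) ≠ 0 := by positivity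
  field_simp

theorem abs_stabilization_mul_sub_le {Φ Φbar : G → ℝ} {D : ℝ}
    (hconjS : ∀ s ∈ S, ∀ g : G, g * s * g⁻¹ ∈ S)
    (hΦ : ∀ s ∈ S, ∀ x, |Φ (s * x) - Φ x| ≤ D)
    (hlim : ∀ g : G, Tendsto (fun n : ℕ => Φ (g ^ n) / n) atTop (𝓝 (Φbar g)))
    (s : G) (hs : s ∈ S) (g : G) :
    |Φbar (s * g) - Φbar g| ≤ D := by
  refine abs_le_of_tendsto_div_natCast (a := fun n => Φ ((s * g) ^ n) - Φ (g ^ n)) ?_ ?_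
  · simpa only [sub_div] using (hlim (s * g)).sub (hlim g)
  · intro n
    have hconj : ∀ t ∈ (List.range n).map fun i => g ^ i * s * (g ^ i)⁻¹, t ∈ S := by
      simp only [List.mem_map]
      rintro _ ⟨i, -, rfl⟩
      exact hconjS s hs (g ^ i)
    simpa [← mul_pow_eq_prod_conj_mul_pow] using abs_apply_list_prod_mul_sub_le hΦ hconj (g ^ n)

end

theorem stabilized_relative_quasimorphism_lipschitz_general
    {G : Type*} [Group G] (S : Set G)
    (hgen : Subgroup.closure S = ⊤)
    (hsymm : ∀ s ∈ S, s⁻¹ ∈ S)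
    (hconjS : ∀ s ∈ S, ∀ g : G, g * s * g⁻¹ ∈ S)
    (Φ : G → ℝ) (C : ℝ) (hC : 0 ≤ C)
    (hrel : ∀ g h : G, |Φ (g * h) - Φ g - Φ h| ≤
      C * min (wordNorm S g : ℝ) (wordNorm S h : ℝ))
    (Φbar : G → ℝ)
    (hlim : ∀ g : G,
      Filter.Tendsto (fun n : ℕ => Φ (g ^ n) / n) Filter.atTop (nhds (Φbar g)))
    (hvanish : ∀ s ∈ S, Φbar s = 0) :
    ∀ f : G, |Φbar f| ≤ 3 * C * (wordNorm S f : ℝ) := by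
  have hdef : ∀ s ∈ S, ∀ x, |Φ (s * x) - Φ s - Φ x| ≤ C := fun s hs x =>
    (hrel s x).trans <| mul_le_of_le_one_right hC <|
      (min_le_left _ _).trans (by exact_mod_cast wordNorm_le_one_of_mem hs)
  have hΦ : ∀ s ∈ S, ∀ x, |Φ (s * x) - Φ x| ≤ 2 * C := by
    intro s hs x
    have hΦs : |Φ s| ≤ C := by
      simpa [hvanish s hs] using abs_stabilization_sub_le (hdef s hs) (hlim s)
    have hdefx := hdef s hs x
    rw [abs_le] at hΦs hdefx ⊢
    constructor <;> linarith
  have hΦbar_one : Φbar 1 = 0 :=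
    tendsto_nhds_unique (hlim 1) (by simpa using tendsto_const_div_atTop_nhds_zero_nat (Φ 1))
  intro f
  obtain ⟨l, hlen, hl, rfl⟩ := exists_list_length_eq_wordNorm hgen hsymm f
  have hbound := abs_apply_list_prod_mul_sub_le
    (abs_stabilization_mul_sub_le hconjS hΦ hlim) hl 1
  rw [mul_one, hΦbar_one, sub_zero, hlen] at hbound
  exact hbound.trans (by gcongr; norm_num)

/-- Let `S` be a symmetric, conjugation-closed generating set of `G`
not containing the identity, and let `Φ` be a relative quasimorphism with respect to
the word norm `‖·‖_S` with constant `C`. If for every `g` the limit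
`Φ̄(g) = lim_{n→∞} Φ(gⁿ)/n` exists and `Φ̄(s) = 0` for every `s ∈ S`, then
`|Φ̄(f)| ≤ 3·C·‖f‖_S` for every `f ∈ G`. -/
theorem stabilized_relative_quasimorphism_lipschitz
    {G : Type*} [Group G] (S : Set G)
    (hgen : Subgroup.closure S = ⊤)
    (hone : (1 : G) ∉ S)
    (hsymm : ∀ s ∈ S, s⁻¹ ∈ S)
    (hconjS : ∀ s ∈ S, ∀ g : G, g * s * g⁻¹ ∈ S)
    (Φ : G → ℝ) (C : ℝ) (hC : 0 ≤ C)
    (hrel : ∀ g h : G, |Φ (g * h) - Φ g - Φ h| ≤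
      C * min (wordNorm S g : ℝ) (wordNorm S h : ℝ))
    (Φbar : G → ℝ)
    (hlim : ∀ g : G,
      Filter.Tendsto (fun n : ℕ => Φ (g ^ n) / n) Filter.atTop (nhds (Φbar g)))
    (hvanish : ∀ s ∈ S, Φbar s = 0) :
    ∀ f : G, |Φbar f| ≤ 3 * C * (wordNorm S f : ℝ) :=
  stabilized_relative_quasimorphism_lipschitz_general S hgen hsymm hconjS Φ C hC hrel Φbar hlim
    hvanish
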